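/- If H is a subquasi-ideal of a Leibniz algebra L over a field F, then H^{(ω)} := ∩_{n≥1} H^{(n)} is a characteristic ideal of L, where H^{(n)} is the n-th term of the derived series of H. -/
import Mathlib


/-! Basic definitions for (right) Leibniz algebras given by a bilinear bracket
on a vector space, following Towers, "Quasi-ideals of Leibniz algebras". -/

section LeibnizDefs

variable {F L : Type*} [Field F] [AddCommGroup L] [Module F L]

/-- The (right) Leibniz identity for a bilinear bracket `b`:
`[x,[y,z]] = [[x,y],z] - [[x,z],y]`. -/
def IsLeibniz (b : L →ₗ[F] L →ₗ[F] L) : Prop :=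
  ∀ x y z : L, b x (b y z) = b (b x y) z - b (b x z) y

/-- `[A,C]`: the span of all brackets `[a,c]` with `a ∈ A`, `c ∈ C`. -/
def bspan (b : L →ₗ[F] L →ₗ[F] L) (A C : Submodule F L) : Submodule F L :=
  Submodule.span F {z : L | ∃ a ∈ A, ∃ c ∈ C, z = b a c}

/-- A subalgebra is a subspace `H` with `[H,H] ⊆ H`. -/
def IsSubalgebra (b : L →ₗ[F] L →ₗ[F] L) (H : Submodule F L) : Prop :=
  bspan b H H ≤ H

/-- An ideal is a subspace `A` with `[A,L] + [L,A] ⊆ A`. -/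
def IsIdeal (b : L →ₗ[F] L →ₗ[F] L) (A : Submodule F L) : Prop :=
  bspan b A ⊤ ⊔ bspan b ⊤ A ≤ A

/-- A quasi-ideal of `L` is a subspace `H` with `[H,K] + [K,H] ⊆ H + K`
for every subspace `K` of `L`. -/
def IsQuasiIdeal (b : L →ₗ[F] L →ₗ[F] L) (H : Submodule F L) : Prop :=
  ∀ K : Submodule F L, bspan b H K ⊔ bspan b K H ≤ H ⊔ K

/-- `H` is a quasi-ideal of the subalgebra `E`: `H ⊆ E` and
`[H,K] + [K,H] ⊆ H + K` for every subspace `K` of `E`. -/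
def IsQuasiIdealIn (b : L →ₗ[F] L →ₗ[F] L) (H E : Submodule F L) : Prop :=
  H ≤ E ∧ ∀ K : Submodule F L, K ≤ E → bspan b H K ⊔ bspan b K H ≤ H ⊔ K

/-- `H` is an `m`-step subquasi-ideal of `L`: there is a chain of subalgebras
`H = H_m qu H_{m-1} qu ... qu H_0 = L`, each a quasi-ideal of the next.
(Here `C i` is `H_i`.) -/
def IsSubquasiIdealSteps (b : L →ₗ[F] L →ₗ[F] L) (m : ℕ) (H : Submodule F L) : Prop :=
  ∃ C : ℕ → Submodule F L, C 0 = ⊤ ∧ C m = H ∧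
    (∀ i ≤ m, IsSubalgebra b (C i)) ∧
    ∀ i < m, IsQuasiIdealIn b (C (i + 1)) (C i)

/-- `H` is a subquasi-ideal of `L` if it is an `m`-step subquasi-ideal for some `m`. -/
def IsSubquasiIdeal (b : L →ₗ[F] L →ₗ[F] L) (H : Submodule F L) : Prop :=
  ∃ m : ℕ, IsSubquasiIdealSteps b m H

/-- Lower central series: `lowerCentral b K n` is `K^{n+1}` in the paper's notation,
i.e. `K^1 = K`, `K^{k+1} = [K^k, K]`. -/
def lowerCentral (b : L →ₗ[F] L →ₗ[F] L) (K : Submodule F L) : ℕ → Submodule F L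
  | 0 => K
  | n + 1 => bspan b (lowerCentral b K n) K

/-- Derived series: `derSeries b H n` is `H^{(n+1)}` in the paper's notation,
i.e. `H^{(1)} = H`, `H^{(k+1)} = [H^{(k)}, H^{(k)}]`. -/
def derSeries (b : L →ₗ[F] L →ₗ[F] L) (H : Submodule F L) : ℕ → Submodule F L
  | 0 => H
  | n + 1 => bspan b (derSeries b H n) (derSeries b H n)

/-- The core `H_L` of `H`: the sum of all ideals of `L` contained in `H`. -/
def coreOf (b : L →ₗ[F] L →ₗ[F] L) (H : Submodule F L) : Submodule F L :=
  sSup {A : Submodule F L | IsIdeal b A ∧ A ≤ H}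

/-- A derivation of the bracket `b`. -/
def IsDerivation (b : L →ₗ[F] L →ₗ[F] L) (d : L →ₗ[F] L) : Prop :=
  ∀ x y : L, d (b x y) = b (d x) y + b x (d y)

/-- `I`: the span of all squares `[x,x]`, `x ∈ L`. -/
def sqSpan (b : L →ₗ[F] L →ₗ[F] L) : Submodule F L :=
  Submodule.span F {z : L | ∃ x : L, z = b x x}

/-- The centre `Z(L) = {z | [z,x] = [x,z] = 0 for all x}`. -/
def lcenter (b : L →ₗ[F] L →ₗ[F] L) : Submodule F L where
  carrier := {z : L | ∀ x : L, b z x = 0 ∧ b x z = 0}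
  zero_mem' := by intro x; simp
  add_mem' := by
    intro y z hy hz x
    obtain ⟨h1, h2⟩ := hy x
    obtain ⟨h3, h4⟩ := hz x
    constructor <;> simp [h1, h2, h3, h4]
  smul_mem' := by
    intro c z hz x
    obtain ⟨h1, h2⟩ := hz x
    constructor <;> simp [h1, h2]

/-- The centre of a subalgebra `E`, as a subspace of `L`:
`Z(E) = {z ∈ E | [z,x] = [x,z] = 0 for all x ∈ E}`. -/
def centerIn (b : L →ₗ[F] L →ₗ[F] L) (E : Submodule F L) : Submodule F L where
  carrier := {z : L | z ∈ E ∧ ∀ x ∈ E, b z x = 0 ∧ b x z = 0}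
  zero_mem' := ⟨E.zero_mem, by intro x _; simp⟩
  add_mem' := by
    intro y z hy hz
    refine ⟨E.add_mem hy.1 hz.1, fun x hx => ?_⟩
    obtain ⟨h1, h2⟩ := hy.2 x hx
    obtain ⟨h3, h4⟩ := hz.2 x hx
    constructor <;> simp [h1, h2, h3, h4]
  smul_mem' := by
    intro c z hz
    refine ⟨E.smul_mem c hz.1, fun x hx => ?_⟩
    obtain ⟨h1, h2⟩ := hz.2 x hx
    constructor <;> simp [h1, h2]

/-- The subalgebra generated by a set `S`. -/
def subalgGen (b : L →ₗ[F] L →ₗ[F] L) (S : Set L) : Submodule F L :=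
  sInf {K : Submodule F L | IsSubalgebra b K ∧ S ⊆ K}

/-- `x` is a left Engel element: for each `y` there is `n` with `R_x^n(y) = 0`,
where `R_x(y) = [y,x]`. -/
def IsLeftEngel (b : L →ₗ[F] L →ₗ[F] L) (x : L) : Prop :=
  ∀ y : L, ∃ n : ℕ, ((b.flip x) ^ n) y = 0

end LeibnizDefs

variable {F L : Type*} [Field F] [AddCommGroup L] [Module F L]

section AuxLemmas

variable {b : L →ₗ[F] L →ₗ[F] L}

lemma mem_bspan (b : L →ₗ[F] L →ₗ[F] L) {A C : Submodule F L} {a c : L}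
    (ha : a ∈ A) (hc : c ∈ C) : b a c ∈ bspan b A C :=
  Submodule.subset_span ⟨a, ha, c, hc, rfl⟩

lemma bspan_le {A C X : Submodule F L}
    (h : ∀ a ∈ A, ∀ c ∈ C, b a c ∈ X) : bspan b A C ≤ X := by
  rw [bspan, Submodule.span_le]
  rintro z ⟨a, ha, c, hc, rfl⟩
  exact h a ha c hc

lemma bspan_mono {A A' C C' : Submodule F L} (hA : A ≤ A') (hC : C ≤ C') :
    bspan b A C ≤ bspan b A' C' :=
  bspan_le fun a ha c hc => mem_bspan b (hA ha) (hC hc)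

lemma mem_of_bspan_left {A C X : Submodule F L} {z x : L}
    (hz : z ∈ bspan b A C) (h : ∀ a ∈ A, ∀ c ∈ C, b (b a c) x ∈ X) : b z x ∈ X := by
  induction hz using Submodule.span_induction with
  | mem y hy => obtain ⟨a, ha, c, hc, rfl⟩ := hy; exact h a ha c hc
  | zero => simpa using X.zero_mem
  | add y z _ _ hy hz => rw [map_add, LinearMap.add_apply]; exact add_mem hy hz
  | smul r y _ hy => rw [map_smul, LinearMap.smul_apply]; exact Submodule.smul_mem _ _ hy

lemma mem_of_bspan_right {A C X : Submodule F L} {z x : L}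
    (hz : z ∈ bspan b A C) (h : ∀ a ∈ A, ∀ c ∈ C, b x (b a c) ∈ X) : b x z ∈ X := by
  induction hz using Submodule.span_induction with
  | mem y hy => obtain ⟨a, ha, c, hc, rfl⟩ := hy; exact h a ha c hc
  | zero => simpa using X.zero_mem
  | add y z _ _ hy hz => rw [map_add]; exact add_mem hy hz
  | smul r y _ hy => rw [map_smul]; exact Submodule.smul_mem _ _ hy

lemma mem_of_bspan_map {A C X : Submodule F L} {d : L →ₗ[F] L} {z : L}
    (hz : z ∈ bspan b A C) (h : ∀ a ∈ A, ∀ c ∈ C, d (b a c) ∈ X) : d z ∈ X := by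
  induction hz using Submodule.span_induction with
  | mem y hy => obtain ⟨a, ha, c, hc, rfl⟩ := hy; exact h a ha c hc
  | zero => simpa using X.zero_mem
  | add y z _ _ hy hz => rw [map_add]; exact add_mem hy hz
  | smul r y _ hy => rw [map_smul]; exact Submodule.smul_mem _ _ hy

lemma derSeries_succ (b : L →ₗ[F] L →ₗ[F] L) (U : Submodule F L) (n : ℕ) :
    derSeries b U (n + 1) = bspan b (derSeries b U n) (derSeries b U n) := rfl

lemma derSeries_succ_le {U : Submodule F L} (hU : IsSubalgebra b U) (n : ℕ) :
    derSeries b U (n + 1) ≤ derSeries b U n := by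
  induction n with
  | zero => exact hU
  | succ n ih => exact bspan_mono ih ih

lemma derSeries_antitone {U : Submodule F L} (hU : IsSubalgebra b U) {m n : ℕ}
    (h : m ≤ n) : derSeries b U n ≤ derSeries b U m := by
  induction h with
  | refl => exact le_rfl
  | step h ih => exact (derSeries_succ_le hU _).trans ih

lemma derSeries_mono {U V : Submodule F L} (h : U ≤ V) (n : ℕ) :
    derSeries b U n ≤ derSeries b V n := by
  induction n with
  | zero => exact h
  | succ n ih => exact bspan_mono ih ih

/-- The basic bootstrapping step via the Leibniz identity. -/
lemma step_lemma (hb : IsLeibniz b) {A X W V : Submodule F L}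
    (h1 : bspan b A X ≤ W) (h2 : bspan b X A ≤ W)
    (h3 : bspan b A W ≤ V) (h4 : bspan b W A ≤ V) :
    bspan b (bspan b A A) X ≤ V ∧ bspan b X (bspan b A A) ≤ V := by
  constructor
  · refine bspan_le fun z hz x hx => ?_
    refine mem_of_bspan_left hz fun a ha c hc => ?_
    have key : b (b a c) x = b a (b c x) + b (b a x) c := by
      rw [hb a c x]; abel
    rw [key]
    exact add_mem (h3 (mem_bspan b ha (h1 (mem_bspan b hc hx))))
      (h4 (mem_bspan b (h1 (mem_bspan b ha hx)) hc))
  · refine bspan_le fun x hx z hz => ?_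
    refine mem_of_bspan_right hz fun a ha c hc => ?_
    rw [hb x a c]
    exact sub_mem (h4 (mem_bspan b (h2 (mem_bspan b hx ha)) hc))
      (h4 (mem_bspan b (h2 (mem_bspan b hx hc)) ha))

lemma square_zero (hb : IsLeibniz b) (a c : L) : b a (b c c) = 0 := by
  rw [hb a c c, sub_self]

/-- Key lemma: if `U` is a quasi-ideal of `E` then `[[U,U],E] + [E,[U,U]] ⊆ U`. -/
lemma quasi_base (hb : IsLeibniz b) {U E : Submodule F L} (hU : IsSubalgebra b U)
    (hUE : IsQuasiIdealIn b U E) :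
    bspan b (bspan b U U) E ≤ U ∧ bspan b E (bspan b U U) ≤ U := by
  have hmul : ∀ a ∈ U, ∀ c ∈ U, b a c ∈ U := fun a ha c hc => hU (mem_bspan b ha hc)
  have core : ∀ x ∈ E, ∀ u ∈ U, ∀ v ∈ U, b (b u v) x ∈ U ∧ b x (b u v) ∈ U := by
    intro x hx u hu v hv
    have hK : Submodule.span F {x} ≤ E := by
      rwa [Submodule.span_singleton_le_iff_mem]
    have hq := hUE.2 _ hK
    have decompR : ∀ w ∈ U, ∃ p ∈ U, ∃ α : F, b w x = p + α • x := by
      intro w hw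
      have hm : b w x ∈ U ⊔ Submodule.span F {x} :=
        hq (Submodule.mem_sup_left (mem_bspan b hw (Submodule.mem_span_singleton_self x)))
      obtain ⟨p, hp, k, hk, heq⟩ := Submodule.mem_sup.1 hm
      obtain ⟨α, rfl⟩ := Submodule.mem_span_singleton.1 hk
      exact ⟨p, hp, α, heq.symm⟩
    have decompL : ∀ w ∈ U, ∃ p ∈ U, ∃ α : F, b x w = p + α • x := by
      intro w hw
      have hm : b x w ∈ U ⊔ Submodule.span F {x} :=
        hq (Submodule.mem_sup_right (mem_bspan b (Submodule.mem_span_singleton_self x) hw))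
      obtain ⟨p, hp, k, hk, heq⟩ := Submodule.mem_sup.1 hm
      obtain ⟨α, rfl⟩ := Submodule.mem_span_singleton.1 hk
      exact ⟨p, hp, α, heq.symm⟩
    obtain ⟨p, hp, α, hpα⟩ := decompR u hu
    obtain ⟨q, hq', β, hqβ⟩ := decompR v hv
    obtain ⟨r, hr, γ, hrγ⟩ := decompL u hu
    obtain ⟨s, hs, δ, hsδ⟩ := decompL v hv
    constructor
    · -- b (b u v) x ∈ U
      have hsum : b u (b v x) + b u (b x v) + b u (b v v) = 0 := by
        have h0 := square_zero hb u (v + x)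
        have hexp : b (v + x) (v + x) = b v v + b v x + b x v + b x x := by
          simp only [map_add, LinearMap.add_apply]
          abel
        rw [hexp] at h0
        simp only [map_add, square_zero hb u x] at h0
        rw [← h0]
        abel
      have hbux : (β + δ) • b u x = -(b u (b v v)) - b u q - b u s := by
        have e1 : b u (b v x) = b u q + β • b u x := by
          rw [hqβ, map_add, map_smul]
        have e2 : b u (b x v) = b u s + δ • b u x := by
          rw [hsδ, map_add, map_smul]
        rw [e1, e2] at hsum
        rw [add_smul]
        linear_combination (norm := module) hsum
      have hwU : (β + δ) • b u x ∈ U := by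
        rw [hbux]
        exact sub_mem (sub_mem (neg_mem (hmul u hu _ (hmul v hv v hv))) (hmul u hu q hq'))
          (hmul u hu s hs)
      have htU : ((β + δ) * α) • x ∈ U := by
        have : ((β + δ) * α) • x = (β + δ) • b u x - (β + δ) • p := by
          rw [hpα]
          module
        rw [this]
        exact sub_mem hwU (Submodule.smul_mem _ _ hp)
      have eB : b (b u v) x
          = b u q + β • p + (b p v + α • s) + ((β + δ) * α) • x := by
        have h1 : b (b u v) x = b u (b v x) + b (b u x) v :=
          (sub_eq_iff_eq_add.1 (hb u v x).symm)
        rw [h1, hqβ, hpα]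
        simp only [map_add, map_smul, LinearMap.add_apply, LinearMap.smul_apply]
        rw [hpα, hsδ]
        module
      rw [eB]
      exact add_mem (add_mem (add_mem (hmul u hu q hq') (Submodule.smul_mem _ _ hp))
        (add_mem (hmul p hp v hv) (Submodule.smul_mem _ _ hs))) htU
    · -- b x (b u v) ∈ U
      have eA : b x (b u v) = b r v + γ • s - (b s u + δ • r) := by
        rw [hb x u v, hrγ, hsδ]
        simp only [map_add, map_smul, LinearMap.add_apply, LinearMap.smul_apply]
        rw [hrγ, hsδ]
        module
      rw [eA]
      exact sub_mem (add_mem (hmul r hr v hv) (Submodule.smul_mem _ _ hs))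
        (add_mem (hmul s hs u hu) (Submodule.smul_mem _ _ hr))
  constructor
  · exact bspan_le fun z hz x hx => mem_of_bspan_left hz
      fun u hu v hv => (core x hx u hu v hv).1
  · exact bspan_le fun x hx z hz => mem_of_bspan_right hz
      fun u hu v hv => (core x hx u hu v hv).2

lemma quasi_derSeries (hb : IsLeibniz b) {U E : Submodule F L} (hU : IsSubalgebra b U)
    (hUE : IsQuasiIdealIn b U E) (n : ℕ) :
    bspan b (derSeries b U (n + 1)) E ≤ derSeries b U n ∧
    bspan b E (derSeries b U (n + 1)) ≤ derSeries b U n := by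
  induction n with
  | zero => exact quasi_base hb hU hUE
  | succ n ih =>
    have h3 : bspan b (derSeries b U (n + 1)) (derSeries b U n) ≤ derSeries b U (n + 1) :=
      bspan_mono (derSeries_succ_le hU n) le_rfl
    have h4 : bspan b (derSeries b U n) (derSeries b U (n + 1)) ≤ derSeries b U (n + 1) :=
      bspan_mono le_rfl (derSeries_succ_le hU n)
    exact step_lemma hb ih.1 ih.2 h3 h4

/-- `[D_{k+c}(Hs), L] + [L, D_{k+c}(Hs)] ⊆ D_k(Hs)` for all `k`. -/
def Widem (b : L →ₗ[F] L →ₗ[F] L) (c : ℕ) (Hs : Submodule F L) : Prop :=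
  ∀ k : ℕ, bspan b (derSeries b Hs (k + c)) ⊤ ≤ derSeries b Hs k ∧
    bspan b ⊤ (derSeries b Hs (k + c)) ≤ derSeries b Hs k

lemma widem_top (hb : IsLeibniz b) : Widem b 0 (⊤ : Submodule F L) := by
  intro k
  induction k with
  | zero => exact ⟨le_top, le_top⟩
  | succ k ih =>
    exact step_lemma hb ih.1 ih.2 le_rfl le_rfl

lemma widem_step (hb : IsLeibniz b) {U E : Submodule F L} {c : ℕ}
    (hU : IsSubalgebra b U) (hE : IsSubalgebra b E)
    (hUE : IsQuasiIdealIn b U E) (hw : Widem b c E) : Widem b (c + 2) U := by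
  intro k
  have hUless : ∀ j, derSeries b U j ≤ derSeries b E j := fun j => derSeries_mono hUE.1 j
  set j := k + c + 1 with hj
  have h1 : bspan b (derSeries b U j) ⊤ ≤ E := by
    refine (bspan_mono (hUless j) le_rfl).trans ?_
    have := (hw (k + 1)).1
    have hidx : k + 1 + c = j := by omega
    rw [hidx] at this
    exact this.trans ((derSeries_antitone hE (Nat.zero_le (k+1))))
  have h2 : bspan b ⊤ (derSeries b U j) ≤ E := by
    refine (bspan_mono le_rfl (hUless j)).trans ?_
    have := (hw (k + 1)).2
    have hidx : k + 1 + c = j := by omega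
    rw [hidx] at this
    exact this.trans ((derSeries_antitone hE (Nat.zero_le (k+1))))
  have h3 : bspan b (derSeries b U j) E ≤ derSeries b U (k + c) := by
    have := (quasi_derSeries hb hU hUE (k + c)).1
    exact this
  have h4 : bspan b E (derSeries b U j) ≤ derSeries b U (k + c) := by
    exact (quasi_derSeries hb hU hUE (k + c)).2
  have main := step_lemma hb h1 h2 h3 h4
  have hidx2 : k + (c + 2) = j + 1 := by omega
  have hle : derSeries b U (k + c) ≤ derSeries b U k :=
    derSeries_antitone hU (Nat.le_add_right k c)
  constructor
  · rw [hidx2, derSeries_succ]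
    exact main.1.trans hle
  · rw [hidx2, derSeries_succ]
    exact main.2.trans hle

lemma chain_widem (hb : IsLeibniz b) {m : ℕ} {H : Submodule F L}
    (h : IsSubquasiIdealSteps b m H) : ∃ c, Widem b c H := by
  obtain ⟨C, hC0, hCm, hsub, hqu⟩ := h
  have key : ∀ i, i ≤ m → ∃ c, Widem b c (C i) := by
    intro i
    induction i with
    | zero => intro _; rw [hC0]; exact ⟨0, widem_top hb⟩
    | succ n ih =>
      intro hn
      obtain ⟨c, hc⟩ := ih (Nat.le_of_succ_le hn)
      exact ⟨c + 2, widem_step hb (hsub (n+1) hn) (hsub n (Nat.le_of_succ_le hn))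
        (hqu n (Nat.lt_of_succ_le hn)) hc⟩
  obtain ⟨c, hc⟩ := key m le_rfl
  rw [hCm] at hc
  exact ⟨c, hc⟩

end AuxLemmas

/-- If `H` is a subquasi-ideal of a Leibniz algebra `L`, then
`H^{(ω)} = ⋂_{n ≥ 1} H^{(n)}` is a characteristic ideal of `L`. -/
theorem derSeries_omega_characteristic_ideal (b : L →ₗ[F] L →ₗ[F] L) (hb : IsLeibniz b)
    (H : Submodule F L) (hH : IsSubquasiIdeal b H) :
    IsIdeal b (⨅ n : ℕ, derSeries b H n) ∧
    ∀ d : L →ₗ[F] L, IsDerivation b d →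
      Submodule.map d (⨅ n : ℕ, derSeries b H n) ≤ ⨅ n : ℕ, derSeries b H n := by
  obtain ⟨m, hsteps⟩ := hH
  have hHsub : IsSubalgebra b H := by
    obtain ⟨C, hC0, hCm, hsub, hqu⟩ := hsteps
    rw [← hCm]; exact hsub m le_rfl
  obtain ⟨c, hw⟩ := chain_widem hb hsteps
  have hinf_le : ∀ n, (⨅ n : ℕ, derSeries b H n) ≤ derSeries b H n :=
    fun n => iInf_le _ n
  constructor
  · refine sup_le ?_ ?_ <;> refine le_iInf fun k => ?_
    · exact (bspan_mono (hinf_le (k + c)) le_rfl).trans (hw k).1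
    · exact (bspan_mono le_rfl (hinf_le (k + c))).trans (hw k).2
  · intro d hd
    refine le_iInf fun k => ?_
    rintro y ⟨z, hz, rfl⟩
    have hz' : z ∈ derSeries b H (k + c + 1) := hinf_le (k + c + 1) hz
    rw [derSeries_succ] at hz'
    refine mem_of_bspan_map hz' fun a ha a' ha' => ?_
    rw [hd a a']
    exact add_mem ((hw k).2 (mem_bspan b Submodule.mem_top ha'))
      ((hw k).1 (mem_bspan b ha Submodule.mem_top))
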